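/- arXiv:1806.11374 — 9 statements merged into one kernel-verified Lean document; each statement's English description precedes it below -/
import Mathlib

section
/- Let A be an m × n matrix with integer entries and let b ∈ ℤ^m be a non-zero vector. Then the system of equations Ax = b is partition regular over ℤ if and only if it has a constant solution, i.e. there exists an integer t such that A applied to the vector (t, t, …, t) equals b. -/
/-- An integer divisible by every positive natural number is zero. -/
lemma all_dvd_eq_zero (a : ℤ) (h : ∀ q : ℕ, 0 < q → (q : ℤ) ∣ a) : a = 0 := by
  by_contra h0
  have h1 := h (a.natAbs + 1) (Nat.succ_pos _)
  have h2 : ((a.natAbs + 1 : ℕ) : ℤ) ∣ (a.natAbs : ℤ) := (Int.dvd_natAbs).mpr h1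
  have h3 := Int.le_of_dvd (by positivity) h2
  push_cast at h3
  have : (0:ℤ) < a.natAbs := by exact_mod_cast Int.natAbs_pos.mpr h0
  omega

/-- **Rado's theorem for inhomogeneous systems over ℤ.**
For an `m × n` integer matrix `A` and a non-zero `b ∈ ℤ^m`, the system `Ax = b` is
partition regular over ℤ (every finite colouring of ℤ admits a monochromatic solution)
if and only if it has a constant solution. -/
theorem rado_inhomogeneous_int {m n : ℕ} (A : Matrix (Fin m) (Fin n) ℤ)
    (b : Fin m → ℤ) (hb : b ≠ 0) :
    (∀ (κ : Type) [Finite κ] (c : ℤ → κ),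
      ∃ x : Fin n → ℤ, (∀ i j : Fin n, c (x i) = c (x j)) ∧ A.mulVec x = b) ↔
    (∃ t : ℤ, A.mulVec (fun _ => t) = b) := by
  constructor
  · intro hPR
    set s : Fin m → ℤ := fun i => ∑ j, A i j with hs
    have key : ∀ q : ℕ, 0 < q → ∃ r : ℤ, ∀ i, (q : ℤ) ∣ s i * r - b i := by
      intro q hq
      haveI : NeZero q := ⟨hq.ne'⟩
      obtain ⟨x, hmono, hAx⟩ := hPR (ZMod q) (fun z => (z : ZMod q))
      rcases Nat.eq_zero_or_pos n with hn | hn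
      · exfalso; apply hb; funext i
        rw [← hAx]
        subst hn
        simp [Matrix.mulVec, dotProduct]
      · refine ⟨x ⟨0, hn⟩, fun i => ?_⟩
        have hbi : b i = ∑ j, A i j * x j := by
          rw [← hAx]; rfl
        have hsum : s i * x ⟨0, hn⟩ - b i = ∑ j, A i j * (x ⟨0, hn⟩ - x j) := by
          rw [hbi, hs]
          rw [Finset.sum_mul, ← Finset.sum_sub_distrib]
          exact Finset.sum_congr rfl (fun j _ => by ring)
        rw [hsum]
        refine Finset.dvd_sum (fun j _ => ?_)
        have h := hmono j ⟨0, hn⟩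
        have hmod : x j ≡ x ⟨0, hn⟩ [ZMOD (q : ℤ)] :=
          (ZMod.intCast_eq_intCast_iff _ _ _).mp h
        exact Dvd.dvd.mul_left hmod.dvd _
    by_cases hs0 : ∀ i, s i = 0
    · exfalso; apply hb; funext i
      apply all_dvd_eq_zero
      intro q hq
      obtain ⟨r, hr⟩ := key q hq
      have h := hr i
      rw [hs0 i, zero_mul, zero_sub] at h
      exact (dvd_neg).mp h
    · push_neg at hs0
      obtain ⟨i0, hsi0⟩ := hs0
      obtain ⟨r0, hr0⟩ := key (s i0).natAbs (Int.natAbs_pos.mpr hsi0)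
      have hdvd : s i0 ∣ b i0 := by
        have h := (Int.natAbs_dvd).mp (hr0 i0)
        have : b i0 = s i0 * r0 - (s i0 * r0 - b i0) := by ring
        rw [this]
        exact dvd_sub (dvd_mul_right _ _) h
      set t : ℤ := b i0 / s i0 with ht
      have hti0 : s i0 * t = b i0 := Int.mul_ediv_cancel' hdvd
      have cross : ∀ i, s i0 * b i = s i * b i0 := by
        intro i
        have hz : s i * b i0 - s i0 * b i = 0 := by
          apply all_dvd_eq_zero
          intro q hq
          obtain ⟨r, hr⟩ := key q hq
          have h1 := hr i
          have h2 := hr i0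
          have : s i * b i0 - s i0 * b i
              = s i0 * (s i * r - b i) - s i * (s i0 * r - b i0) := by ring
          rw [this]
          exact dvd_sub (h1.mul_left _) (h2.mul_left _)
        linarith [hz]
      refine ⟨t, funext fun i => ?_⟩
      have hconst : A.mulVec (fun _ => t) i = s i * t := by
        simp [Matrix.mulVec, dotProduct, hs, Finset.sum_mul]
      rw [hconst]
      have : s i0 * (s i * t) = s i0 * b i := by
        rw [cross i]
        calc s i0 * (s i * t) = s i * (s i0 * t) := by ring
          _ = s i * b i0 := by rw [hti0]
      exact mul_left_cancel₀ hsi0 this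
  · rintro ⟨t, ht⟩ κ _ c
    exact ⟨fun _ => t, fun i j => rfl, ht⟩
end

section
/- Let A be an m × n matrix with integer entries and let b ∈ ℤ^m be a non-zero vector. If the system Ax = b has no constant solution (i.e. there is no integer t with A applied to (t, t, …, t) equal to b), then there exists a finite colouring of ℤ such that no vector x ∈ ℤ^n with all entries of the same colour satisfies Ax = b. -/
/-- If the system `Ax = b` (with `A` an integer matrix, `b ∈ ℤ^m`) has no constant
solution, then there is a finite colouring of ℤ with no monochromatic solution. -/
theorem exists_bad_colouring_int {m n : ℕ} (A : Matrix (Fin m) (Fin n) ℤ)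
    (b : Fin m → ℤ) (hb : b ≠ 0)
    (h : ¬ ∃ t : ℤ, A.mulVec (fun _ => t) = b) :
    ∃ (κ : Type) (_ : Finite κ) (c : ℤ → κ),
      ¬ ∃ x : Fin n → ℤ, (∀ i j : Fin n, c (x i) = c (x j)) ∧ A.mulVec x = b := by
  rcases Nat.eq_zero_or_pos n with hn | hn
  · subst hn
    refine ⟨Unit, inferInstance, fun _ => (), ?_⟩
    rintro ⟨x, -, hx⟩
    apply hb
    rw [← hx]
    funext k
    simp [Matrix.mulVec, dotProduct]
  set s : Fin m → ℤ := A.mulVec (fun _ => 1) with hs_def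
  have hconst : ∀ t : ℤ, A.mulVec (fun _ => t) = fun k => t * s k := by
    intro t
    funext k
    simp [hs_def, Matrix.mulVec, dotProduct, Finset.mul_sum, mul_comm]
  -- key: for a colouring mod q, a monochromatic solution gives r with q ∣ b k - r * s k
  have key : ∀ q : ℕ, 0 < q →
      (∃ x : Fin n → ℤ, (∀ i j : Fin n, ((x i : ZMod q)) = (x j : ZMod q)) ∧ A.mulVec x = b) →
      ∃ r : ℤ, ∀ k, (q : ℤ) ∣ b k - r * s k := by
    rintro q hq ⟨x, hmono, hx⟩
    set r : ℤ := x ⟨0, hn⟩ with hr_def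
    refine ⟨r, fun k => ?_⟩
    have h1 : ((b k : ZMod q)) = ((r * s k : ℤ) : ZMod q) := by
      rw [← hx]
      show ((A.mulVec x k : ℤ) : ZMod q) = _
      have e1 : ((A.mulVec x k : ℤ) : ZMod q) = ∑ j, (A k j : ZMod q) * (x j : ZMod q) := by
        simp [Matrix.mulVec, dotProduct]
      have e2 : ((r * s k : ℤ) : ZMod q) = ∑ j, (A k j : ZMod q) * (r : ZMod q) := by
        simp [hs_def, Matrix.mulVec, dotProduct, Finset.mul_sum]
        ring_nf
      rw [e1, e2]
      refine Finset.sum_congr rfl fun j _ => ?_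
      rw [hmono j ⟨0, hn⟩]
    have h2 : b k ≡ r * s k [ZMOD q] := (ZMod.intCast_eq_intCast_iff _ _ _).mp h1
    exact (dvd_sub_comm).mp h2.dvd
  by_cases hs : s = 0
  · obtain ⟨i, hbi⟩ := Function.ne_iff.mp hb
    refine ⟨ZMod ((b i).natAbs + 1), inferInstance, fun z => (z : ZMod _), ?_⟩
    intro hx
    obtain ⟨r, hr⟩ := key _ (Nat.succ_pos _) hx
    have hdvd := hr i
    rw [hs] at hdvd
    simp only [Pi.zero_apply, mul_zero, sub_zero] at hdvd
    have h3 : (b i).natAbs + 1 ∣ (b i).natAbs := by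
      have h := Int.natAbs_dvd_natAbs.mpr hdvd
      simpa only [Int.natAbs_natCast] using h
    have h4 : (b i).natAbs ≠ 0 := Int.natAbs_ne_zero.mpr hbi
    have := Nat.le_of_dvd (Nat.pos_of_ne_zero h4) h3
    omega
  · obtain ⟨i, hsi⟩ := Function.ne_iff.mp hs
    set D : ℕ := ∑ k, (s i * b k - s k * b i).natAbs with hD_def
    set q : ℕ := (s i).natAbs * (1 + D) with hq_def
    have hq : 0 < q := by
      have : 0 < (s i).natAbs := Int.natAbs_pos.mpr hsi
      positivity
    haveI : NeZero q := ⟨hq.ne'⟩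
    refine ⟨ZMod q, inferInstance, fun z => (z : ZMod q), ?_⟩
    intro hx
    obtain ⟨r, hr⟩ := key _ hq hx
    -- s i ∣ q
    have hsiq : s i ∣ (q : ℤ) := by
      rw [← Int.natAbs_dvd]
      exact Int.ofNat_dvd.mpr ⟨1 + D, rfl⟩
    -- s i ∣ b i
    have hsib : s i ∣ b i := by
      have h5 : s i ∣ b i - r * s i := hsiq.trans (hr i)
      have h6 : s i ∣ r * s i := dvd_mul_left (s i) r
      have := dvd_add h5 h6
      simpa using this
    obtain ⟨t, ht⟩ := hsib
    -- cross terms vanish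
    have hcross : ∀ k, s i * b k - s k * b i = 0 := by
      intro k
      have h7 : (q : ℤ) ∣ s i * (b k - r * s k) - s k * (b i - r * s i) :=
        dvd_sub (Dvd.dvd.mul_left (hr k) _) (Dvd.dvd.mul_left (hr i) _)
      have h8 : s i * (b k - r * s k) - s k * (b i - r * s i) = s i * b k - s k * b i := by
        ring
      rw [h8] at h7
      by_contra hne
      have h9 : q ∣ (s i * b k - s k * b i).natAbs := by
        have := Int.natAbs_dvd_natAbs.mpr h7
        simpa using this
      have h10 : (s i * b k - s k * b i).natAbs ≠ 0 := Int.natAbs_ne_zero.mpr hne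
      have h11 := Nat.le_of_dvd (Nat.pos_of_ne_zero h10) h9
      have h12 : (s i * b k - s k * b i).natAbs ≤ D :=
        Finset.single_le_sum (f := fun k => (s i * b k - s k * b i).natAbs)
          (fun _ _ => Nat.zero_le _) (Finset.mem_univ k)
      have h13 : 0 < (s i).natAbs := Int.natAbs_pos.mpr hsi
      have h14 : q ≥ 1 + D := by
        calc q = (s i).natAbs * (1 + D) := rfl
        _ ≥ 1 * (1 + D) := Nat.mul_le_mul_right _ h13
        _ = 1 + D := one_mul _
      omega
    -- constant solution t
    apply h
    refine ⟨t, ?_⟩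
    rw [hconst]
    funext k
    have h15 := hcross k
    have h16 : s i * (t * s k) = s i * b k := by
      rw [show s i * (t * s k) = s k * (s i * t) by ring, ← ht]
      omega
    exact mul_left_cancel₀ hsi h16
end

section
/- Let H be a subgroup of ℤ^m and let b ∈ ℤ^m with b ∉ H. Then there exist a positive integer d and an additive group homomorphism θ : ℤ^m → ℤ/dℤ such that θ vanishes on H and θ(b) ≠ 0. -/
/-!
The quotient `ℤ^m ⧸ H` is finitely generated, so by the structure theorem it is
`ℤ^n × ⨁ ZMod (p ^ e)`. A nonzero element has a nonzero coordinate, either some `k ≠ 0` in `ℤ`,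
which survives modulo `|k| + 1`, or a nonzero residue in some `ZMod (p ^ e)`; the corresponding
coordinate map, composed with the quotient map, is the required `θ`.
-/

def SeparatedByZMod (G : Type*) [AddCommGroup G] : Prop :=
  ∀ g : G, g ≠ 0 → ∃ d : ℕ, 0 < d ∧ ∃ φ : G →+ ZMod d, φ g ≠ 0

namespace SeparatedByZMod

variable {G G' : Type*} [AddCommGroup G] [AddCommGroup G']

theorem of_injective {f : G →+ G'} (hf : Function.Injective f) (h : SeparatedByZMod G') :
    SeparatedByZMod G := fun g hg ↦ by
  obtain ⟨d, hd, φ, hφ⟩ := h (f g) ((map_ne_zero_iff f hf).mpr hg)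
  exact ⟨d, hd, φ.comp f, hφ⟩

theorem of_addEquiv (e : G ≃+ G') (h : SeparatedByZMod G') : SeparatedByZMod G :=
  of_injective (f := e.toAddMonoidHom) e.injective h

theorem zmod (n : ℕ) [NeZero n] : SeparatedByZMod (ZMod n) :=
  fun _ hg ↦ ⟨n, Nat.pos_of_neZero n, AddMonoidHom.id _, hg⟩

theorem int : SeparatedByZMod ℤ := fun k hk ↦ by
  refine ⟨k.natAbs + 1, k.natAbs.succ_pos, Int.castAddHom _, fun hzero ↦ ?_⟩
  have hdvd : ((k.natAbs + 1 : ℕ) : ℤ) ∣ k := (ZMod.intCast_zmod_eq_zero_iff_dvd k _).mp hzero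
  have := Int.natAbs_le_of_dvd_ne_zero hdvd hk
  omega

theorem prod (h : SeparatedByZMod G) (h' : SeparatedByZMod G') : SeparatedByZMod (G × G') := by
  rintro ⟨g, g'⟩ hgg'
  by_cases hg : g = 0
  · obtain ⟨d, hd, φ, hφ⟩ := h' g' fun hg' ↦ hgg' (by simp [hg, hg'])
    exact ⟨d, hd, φ.comp (AddMonoidHom.snd G G'), hφ⟩
  · obtain ⟨d, hd, φ, hφ⟩ := h g hg
    exact ⟨d, hd, φ.comp (AddMonoidHom.fst G G'), hφ⟩

theorem pi {ι : Type*} {β : ι → Type*} [∀ i, AddCommGroup (β i)]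
    (h : ∀ i, SeparatedByZMod (β i)) : SeparatedByZMod (∀ i, β i) := fun g hg ↦ by
  obtain ⟨i, hi⟩ := Function.ne_iff.mp hg
  obtain ⟨d, hd, φ, hφ⟩ := h i (g i) hi
  exact ⟨d, hd, φ.comp (Pi.evalAddMonoidHom β i), hφ⟩

theorem of_fg [AddGroup.FG G] : SeparatedByZMod G := by
  obtain ⟨n, ι, _, p, hp, e, ⟨eqv⟩⟩ := AddCommGroup.equiv_free_prod_directSum_zmod G
  have : ∀ i, NeZero (p i ^ e i) := fun i ↦ ⟨pow_ne_zero _ (hp i).ne_zero⟩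
  refine of_addEquiv eqv (prod ?_ ?_)
  · exact of_injective (f := Finsupp.coeFnAddHom) DFunLike.coe_injective (pi fun _ ↦ int)
  · exact of_injective (f := DFinsupp.coeFnAddMonoidHom) DFunLike.coe_injective
      (pi fun i ↦ zmod (p i ^ e i))

end SeparatedByZMod

/-- If `H` is a subgroup of `ℤ^m` and `b ∉ H`, then there is a positive integer `d`
and an additive group homomorphism `θ : ℤ^m → ℤ/dℤ` vanishing on `H` with `θ b ≠ 0`. -/
theorem exists_hom_to_zmod_separating {m : ℕ} (H : AddSubgroup (Fin m → ℤ))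
    (b : Fin m → ℤ) (hb : b ∉ H) :
    ∃ (d : ℕ), 0 < d ∧ ∃ θ : (Fin m → ℤ) →+ ZMod d,
      (∀ h ∈ H, θ h = 0) ∧ θ b ≠ 0 := by
  have hbQ : (QuotientAddGroup.mk' H b) ≠ 0 := by
    rwa [Ne, QuotientAddGroup.mk'_apply, QuotientAddGroup.eq_zero_iff]
  obtain ⟨d, hd, φ, hφ⟩ := SeparatedByZMod.of_fg _ hbQ
  refine ⟨d, hd, φ.comp (QuotientAddGroup.mk' H), fun h hh ↦ ?_, hφ⟩
  simp [(QuotientAddGroup.eq_zero_iff h).mpr hh]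
end

section
/- Let A be an m × n integer matrix with columns c⁽¹⁾, …, c⁽ⁿ⁾ and column sum s = c⁽¹⁾ + ⋯ + c⁽ⁿ⁾, let b ∈ ℤ^m, let d be a positive integer, and let θ : ℤ^m → ℤ/dℤ be an additive group homomorphism with θ(s) = 0 and θ(b) ≠ 0. Colour each integer t with the n-tuple (θ(c⁽¹⁾t), …, θ(c⁽ⁿ⁾t)) ∈ (ℤ/dℤ)^n. Then there is no vector x ∈ ℤ^n, all of whose entries receive the same colour under this colouring, satisfying Ax = b. -/
/-- Let `A` be an `m × n` integer matrix with columns `c⁽¹⁾, …, c⁽ⁿ⁾` and column sum `s`,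
let `b ∈ ℤ^m`, and let `θ : ℤ^m → ℤ/dℤ` be an additive homomorphism with `θ s = 0` and
`θ b ≠ 0`. Colour each `t : ℤ` by the tuple `(θ(c⁽¹⁾t), …, θ(c⁽ⁿ⁾t)) ∈ (ℤ/dℤ)^n`.
Then no vector `x ∈ ℤ^n` all of whose entries receive the same colour satisfies `Ax = b`. -/
theorem no_monochromatic_solution_int {m n : ℕ} (A : Matrix (Fin m) (Fin n) ℤ)
    (b : Fin m → ℤ) (d : ℕ) (hd : 0 < d) (θ : (Fin m → ℤ) →+ ZMod d)
    (hs : θ (fun k => ∑ i : Fin n, A k i) = 0) (hb : θ b ≠ 0)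
    (colouring : ℤ → (Fin n → ZMod d))
    (hcol : ∀ t : ℤ, colouring t = fun i => θ (fun k => A k i * t)) :
    ¬ ∃ x : Fin n → ℤ,
      (∀ i j : Fin n, colouring (x i) = colouring (x j)) ∧ A.mulVec x = b := by
  rintro ⟨x, hmono, hAx⟩
  apply hb
  rw [← hAx]
  rcases Nat.eq_zero_or_pos n with hn | hn
  · subst hn
    have h0 : A.mulVec x = 0 := by
      funext k; simp [Matrix.mulVec, dotProduct]
    rw [h0, map_zero]
  · set i0 : Fin n := ⟨0, hn⟩ with hi0
    have hAxeq : A.mulVec x = ∑ i : Fin n, (fun k => A k i * x i) := by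
      funext k; simp [Matrix.mulVec, dotProduct, Finset.sum_apply]
    rw [hAxeq, map_sum]
    have step : ∀ i, θ (fun k => A k i * x i) = θ (fun k => A k i * x i0) := by
      intro i
      have := congrFun ((hcol (x i)).symm.trans ((hmono i i0).trans (hcol (x i0)))) i
      simpa using this
    rw [Finset.sum_congr rfl (fun i _ => step i)]
    have hsum : ∑ i : Fin n, θ (fun k => A k i * x i0)
        = θ (x i0 • fun k => ∑ i : Fin n, A k i) := by
      rw [← map_sum]
      congr 1
      funext k
      simp [Finset.sum_apply, Finset.sum_mul, mul_comm]
    rw [hsum, map_zsmul, hs, smul_zero]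
end

section
/- Let R be a commutative ring, let A be an m × n matrix with entries in R, and let b ∈ R^m be non-zero. Then the system of equations Ax = b is partition regular over R if and only if it has a constant solution, i.e. there exists r ∈ R such that A applied to the vector (r, r, …, r) equals b. -/
/-!
If `Ax = b` has no constant solution, then `b` lies outside the subgroup `{A (r, …, r) : r ∈ R}`
of `R^m`, so some homomorphism `G : R^m → ℝ/ℤ` kills every `A (r, …, r)` but not `b`. Colour
`r ∈ R` by the cells of a fine finite partition of the compact circle that contain the points
`G (r • Aⱼ)`, where `Aⱼ` are the columns of `A`. For a monochromatic `x` with `Ax = b` and `r`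
of the common colour, each `G (xⱼ • Aⱼ)` is close to `G (r • Aⱼ)`, so `G b = ∑ⱼ G (xⱼ • Aⱼ)` is
close to `∑ⱼ G (r • Aⱼ) = G (A (r, …, r)) = 0`, contradicting `G b ≠ 0` once the cells are small.
-/

theorem exists_fin_colouring_dist_lt {X : Type*} [PseudoMetricSpace X] [CompactSpace X]
    {ε : ℝ} (hε : 0 < ε) : ∃ (N : ℕ) (c : X → Fin N), ∀ x y, c x = c y → dist x y < ε := by
  obtain ⟨t, -, ht, hcover⟩ :=
    finite_cover_balls_of_compact (isCompact_univ (X := X)) (half_pos hε)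
  have hcentre (x : X) : ∃ y : t, dist x y < ε / 2 := by
    simpa using hcover (Set.mem_univ x)
  choose centre hcentre using hcentre
  have := ht.to_subtype
  obtain ⟨N, ⟨e⟩⟩ := Finite.exists_equiv_fin t
  refine ⟨N, fun x => e (centre x), fun x y hxy => ?_⟩
  have hxy : centre x = centre y := e.injective hxy
  calc dist x y ≤ dist x (centre x) + dist y (centre y) := by
        rw [hxy]; exact dist_triangle_right _ _ _
    _ < ε / 2 + ε / 2 := add_lt_add (hcentre x) (hcentre y)
    _ = ε := add_halves ε

theorem exists_forall_colour_eq {ι α κ : Type*} [Nonempty α] {c : α → κ} {x : ι → α}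
    (hx : ∀ i j, c (x i) = c (x j)) : ∃ a, ∀ i, c (x i) = c a := by
  cases isEmpty_or_nonempty ι with
  | inl _ => exact ⟨Classical.arbitrary α, isEmptyElim⟩
  | inr h => exact ⟨x h.some, fun i => hx i h.some⟩

namespace AddCircle

noncomputable def ratToReal : AddCircle (1 : ℚ) →+ AddCircle (1 : ℝ) :=
  QuotientAddGroup.map _ _ (Rat.castHom ℝ).toAddMonoidHom fun q hq => by
    obtain ⟨k, rfl⟩ := AddSubgroup.mem_zmultiples_iff.mp hq
    exact AddSubgroup.mem_zmultiples_iff.mpr ⟨k, by simp⟩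

theorem ratToReal_coe (q : ℚ) :
    ratToReal (q : AddCircle (1 : ℚ)) = ((q : ℝ) : AddCircle (1 : ℝ)) :=
  rfl

theorem ratToReal_injective : Function.Injective ratToReal := by
  refine (injective_iff_map_eq_zero _).mpr fun z hz => ?_
  induction z using QuotientAddGroup.induction_on with | H q => ?_
  obtain ⟨k, hk⟩ := (coe_eq_zero_iff 1).mp (ratToReal_coe q ▸ hz)
  have hk : (k : ℚ) = q := by exact_mod_cast (by simpa using hk : (k : ℝ) = q)
  exact (coe_eq_zero_iff 1).mpr ⟨k, by simpa using hk⟩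

end AddCircle

theorem exists_addMonoidHom_addCircle_eq_zero_ne_zero {M : Type*} [AddCommGroup M]
    {p : AddSubgroup M} {b : M} (hb : b ∉ p) :
    ∃ G : M →+ AddCircle (1 : ℝ), (∀ y ∈ p, G y = 0) ∧ G b ≠ 0 := by
  have hb' : (QuotientAddGroup.mk b : M ⧸ p) ≠ 0 := by
    rwa [Ne, QuotientAddGroup.eq_zero_iff]
  obtain ⟨χ, hχ⟩ := CharacterModule.exists_character_apply_ne_zero_of_ne_zero hb'
  refine ⟨AddCircle.ratToReal.comp
    ((χ : M ⧸ p →+ AddCircle (1 : ℚ)).comp (QuotientAddGroup.mk' p)), fun y hy => ?_, ?_⟩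
  · change AddCircle.ratToReal (χ (QuotientAddGroup.mk y)) = 0
    rw [(QuotientAddGroup.eq_zero_iff y).mpr hy, map_zero, map_zero]
  · change AddCircle.ratToReal (χ (QuotientAddGroup.mk b)) ≠ 0
    rwa [← map_zero AddCircle.ratToReal, AddCircle.ratToReal_injective.ne_iff]

namespace Matrix

variable {R : Type*} [CommRing R] {m n : ℕ}

def IsPartitionRegular (A : Matrix (Fin m) (Fin n) R) (b : Fin m → R) : Prop :=
  ∀ (κ : Type) [Finite κ] (c : R → κ),
    ∃ x : Fin n → R, (∀ i j : Fin n, c (x i) = c (x j)) ∧ A *ᵥ x = b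

theorem mulVec_eq_sum_smul_transpose (A : Matrix (Fin m) (Fin n) R) (x : Fin n → R) :
    A *ᵥ x = ∑ j, x j • Aᵀ j := by
  simp [mulVec_eq_sum, op_smul_eq_smul]

theorem not_isPartitionRegular_of_addMonoidHom {X : Type*} [NormedAddCommGroup X]
    [CompactSpace X] {A : Matrix (Fin m) (Fin n) R} {b : Fin m → R} (G : (Fin m → R) →+ X)
    (hconst : ∀ r, G (A *ᵥ fun _ => r) = 0) (hb : G b ≠ 0) : ¬ A.IsPartitionRegular b := by
  intro hA
  set ε := ‖G b‖ / (n + 1)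
  have hGb : 0 < ‖G b‖ := norm_pos_iff.mpr hb
  obtain ⟨N, c, hc⟩ := exists_fin_colouring_dist_lt (X := X) (show 0 < ε by positivity)
  obtain ⟨x, hmono, hx⟩ := hA (Fin n → Fin N) fun r j => c (G (r • Aᵀ j))
  obtain ⟨r, hr⟩ := exists_forall_colour_eq (c := fun r j => c (G (r • Aᵀ j))) hmono
  have hclose (j : Fin n) : dist (G (x j • Aᵀ j)) (G (r • Aᵀ j)) < ε :=
    hc _ _ (congrFun (hr j) j)
  have hle : ‖G b‖ ≤ n * ε := calc
    ‖G b‖ = ‖G (A *ᵥ x) - G (A *ᵥ fun _ => r)‖ := by rw [hx, hconst, sub_zero]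
    _ = ‖∑ j, (G (x j • Aᵀ j) - G (r • Aᵀ j))‖ := by
      simp only [mulVec_eq_sum_smul_transpose, map_sum, Finset.sum_sub_distrib]
    _ ≤ ∑ j, dist (G (x j • Aᵀ j)) (G (r • Aᵀ j)) := by
      simpa only [dist_eq_norm] using norm_sum_le _ _
    _ ≤ ∑ _j : Fin n, ε := Finset.sum_le_sum fun j _ => (hclose j).le
    _ = n * ε := by simp
  have hlt : n * ε < ‖G b‖ := by
    rw [mul_div_assoc', div_lt_iff₀ (by positivity)]
    linarith
  linarith

theorem exists_mulVec_const_eq_of_isPartitionRegular {A : Matrix (Fin m) (Fin n) R}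
    {b : Fin m → R} (hA : A.IsPartitionRegular b) : ∃ r : R, A *ᵥ (fun _ => r) = b := by
  by_contra hb
  let constSolutions : R →+ (Fin m → R) :=
    AddMonoidHom.mk' (fun r => A *ᵥ fun _ => r) fun _ _ => A.mulVec_add _ _
  obtain ⟨G, hG, hGb⟩ := exists_addMonoidHom_addCircle_eq_zero_ne_zero
    (p := constSolutions.range) (b := b) fun ⟨r, hr⟩ => hb ⟨r, hr⟩
  exact not_isPartitionRegular_of_addMonoidHom G (fun r => hG _ ⟨r, rfl⟩) hGb hA

theorem isPartitionRegular_of_mulVec_const_eq {A : Matrix (Fin m) (Fin n) R} {b : Fin m → R}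
    {r : R} (hr : A *ᵥ (fun _ => r) = b) : A.IsPartitionRegular b :=
  fun _ _ _ => ⟨_, fun _ _ => rfl, hr⟩

end Matrix

theorem rado_inhomogeneous_ring_general {R : Type*} [CommRing R] {m n : ℕ}
    (A : Matrix (Fin m) (Fin n) R) (b : Fin m → R) :
    (∀ (κ : Type) [Finite κ] (c : R → κ),
      ∃ x : Fin n → R, (∀ i j : Fin n, c (x i) = c (x j)) ∧ A.mulVec x = b) ↔
    (∃ r : R, A.mulVec (fun _ => r) = b) :=
  ⟨Matrix.exists_mulVec_const_eq_of_isPartitionRegular,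
    fun ⟨_, hr⟩ => Matrix.isPartitionRegular_of_mulVec_const_eq hr⟩

/-- **Rado's theorem for inhomogeneous systems over a general commutative ring.**
For an `m × n` matrix `A` over a commutative ring `R` and non-zero `b ∈ R^m`, the system
`Ax = b` is partition regular over `R` iff it has a constant solution. -/
theorem rado_inhomogeneous_ring {R : Type*} [CommRing R] {m n : ℕ}
    (A : Matrix (Fin m) (Fin n) R) (b : Fin m → R) (hb : b ≠ 0) :
    (∀ (κ : Type) [Finite κ] (c : R → κ),
      ∃ x : Fin n → R, (∀ i j : Fin n, c (x i) = c (x j)) ∧ A.mulVec x = b) ↔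
    (∃ r : R, A.mulVec (fun _ => r) = b) :=
  rado_inhomogeneous_ring_general A b
end

section
/- Let R be a commutative ring, let A be an m × n matrix with entries in R, and let b ∈ R^m be non-zero. If the system Ax = b has no constant solution (i.e. there is no r ∈ R with A applied to (r, r, …, r) equal to b), then there exists a finite colouring of R such that no vector x ∈ R^n with all entries of the same colour satisfies Ax = b. -/
/-!
If `A x₀ = b`, then `x₀ ∉ ker A + R ∙ (1, …, 1)`, since otherwise `b` has a constant solution.
So some character `g : Rⁿ →+ ℝ/ℤ` kills `ker A` and the constant vectors but not `x₀`. Colour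
`r ∈ R` by the cells, in a finite cover of `ℝ/ℤ` by sets of diameter `< ‖g x₀‖ / n`, of the points
`g (r eⱼ)`. For a monochromatic solution `x` and any index `i₀`,
`g x₀ = g x - g (x i₀, …, x i₀) = ∑ⱼ (g (x j eⱼ) - g (x i₀ eⱼ))`
is a sum of `n` differences within cells, hence has norm `< ‖g x₀‖`.
-/

open Matrix Metric

universe u

theorem exists_finite_colouring_dist_lt {X : Type u} [PseudoMetricSpace X] [CompactSpace X]
    {ε : ℝ} (hε : 0 < ε) :
    ∃ (κ : Type u) (_ : Finite κ) (c : X → κ), ∀ x y, c x = c y → dist x y < ε := by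
  obtain ⟨t, -, hcover⟩ := isCompact_univ.elim_nhds_subcover (fun x : X ↦ ball x (ε / 2))
    fun x _ ↦ ball_mem_nhds x (half_pos hε)
  have hcentre : ∀ x, ∃ z : t, x ∈ ball (z : X) (ε / 2) := fun x ↦ by
    simpa using hcover (Set.mem_univ x)
  choose c hc using hcentre
  refine ⟨t, inferInstance, c, fun x y hxy ↦ ?_⟩
  calc dist x y ≤ dist x (c x) + dist (c y : X) y := by rw [hxy]; exact dist_triangle _ _ _
    _ < ε / 2 + ε / 2 := add_lt_add (hc x) (by rw [dist_comm]; exact hc y)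
    _ = ε := add_halves ε

theorem exists_finite_colouring_sum_sub_ne {G : Type u} [NormedAddCommGroup G] [CompactSpace G]
    (ι : Type*) [Fintype ι] {t : G} (ht : t ≠ 0) :
    ∃ (κ : Type u) (_ : Finite κ) (c : G → κ),
      ∀ u v : ι → G, (∀ i, c (u i) = c (v i)) → ∑ i, (u i - v i) ≠ t := by
  set ε := ‖t‖ / (Fintype.card ι + 1)
  have hε : 0 < ε := div_pos (norm_pos_iff.2 ht) (by positivity)
  obtain ⟨κ, hκ, c, hc⟩ := exists_finite_colouring_dist_lt (X := G) hε
  refine ⟨κ, hκ, c, fun u v huv hsum ↦ ?_⟩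
  have hsmall : ‖t‖ ≤ Fintype.card ι * ε := calc
    ‖t‖ ≤ ∑ i, ‖u i - v i‖ := hsum ▸ norm_sum_le _ _
    _ ≤ ∑ _i : ι, ε := Finset.sum_le_sum fun i _ ↦ (dist_eq_norm (u i) (v i) ▸ hc _ _ (huv i)).le
    _ = Fintype.card ι * ε := by simp
  have : Fintype.card ι * ε < ‖t‖ := by
    rw [mul_div_assoc', div_lt_iff₀ (by positivity)]
    nlinarith [norm_pos_iff.2 ht]
  linarith

/-- `ℚ/ℤ` carries no norm; it embeds into the compact normed group `ℝ/ℤ`. -/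
noncomputable def AddCircle.ratCastHom : AddCircle (1 : ℚ) →+ AddCircle (1 : ℝ) :=
  QuotientAddGroup.map _ _ (Rat.castHom ℝ).toAddMonoidHom <| by
    rintro _ ⟨k, rfl⟩
    exact ⟨k, by simp⟩

theorem AddCircle.ratCastHom_injective : Function.Injective AddCircle.ratCastHom := by
  refine (injective_iff_map_eq_zero _).2 fun a ha ↦ ?_
  obtain ⟨q, rfl⟩ := QuotientAddGroup.mk_surjective a
  obtain ⟨k, hk⟩ := (AddCircle.coe_eq_zero_iff (1 : ℝ)).1 ha
  exact (AddCircle.coe_eq_zero_iff (1 : ℚ)).2 ⟨k, by simp at hk ⊢; exact_mod_cast hk⟩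

theorem AddSubgroup.exists_addCircleHom_of_notMem {M : Type*} [AddCommGroup M]
    {N : AddSubgroup M} {x : M} (hx : x ∉ N) :
    ∃ g : M →+ AddCircle (1 : ℝ), N ≤ g.ker ∧ g x ≠ 0 := by
  have hx' : (x : M ⧸ N) ≠ 0 := by rwa [Ne, QuotientAddGroup.eq_zero_iff]
  obtain ⟨φ, hφ⟩ := CharacterModule.exists_character_apply_ne_zero_of_ne_zero hx'
  refine ⟨AddCircle.ratCastHom.comp (AddMonoidHom.comp φ (QuotientAddGroup.mk' N)),
    fun y hy ↦ ?_, ?_⟩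
  · change AddCircle.ratCastHom (φ (y : M ⧸ N)) = 0
    rw [(QuotientAddGroup.eq_zero_iff y).2 hy, map_zero, map_zero]
  · exact (map_ne_zero_iff _ AddCircle.ratCastHom_injective).2 hφ

theorem Matrix.notMem_ker_sup_span_one {m n R : Type*} [Fintype n] [CommRing R]
    {A : Matrix m n R} {b : m → R} {x : n → R} (hx : A *ᵥ x = b)
    (h : ¬ ∃ r : R, A *ᵥ (fun _ ↦ r) = b) : x ∉ LinearMap.ker A.mulVecLin ⊔ R ∙ 1 := by
  intro hmem
  obtain ⟨y, hy, z, hz, rfl⟩ := Submodule.mem_sup.1 hmem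
  obtain ⟨r, rfl⟩ := Submodule.mem_span_singleton.1 hz
  refine h ⟨r, ?_⟩
  have hy : A *ᵥ y = 0 := hy
  rw [← hx, mulVec_add, hy, zero_add]
  congr
  ext
  simp

theorem exists_bad_colouring_ring_general {R : Type*} [CommRing R] {m n : ℕ}
    (A : Matrix (Fin m) (Fin n) R) (b : Fin m → R)
    (h : ¬ ∃ r : R, A.mulVec (fun _ => r) = b) :
    ∃ (κ : Type) (_ : Finite κ) (c : R → κ),
      ¬ ∃ x : Fin n → R, (∀ i j : Fin n, c (x i) = c (x j)) ∧ A.mulVec x = b := by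
  by_cases hsol : ∃ x₀, A *ᵥ x₀ = b
  swap
  · exact ⟨Unit, inferInstance, fun _ ↦ (), fun ⟨x, _, hx⟩ ↦ hsol ⟨x, hx⟩⟩
  obtain ⟨x₀, hx₀⟩ := hsol
  set N := LinearMap.ker A.mulVecLin ⊔ R ∙ (1 : Fin n → R)
  obtain ⟨g, hgN, hgx₀⟩ := AddSubgroup.exists_addCircleHom_of_notMem (N := N.toAddSubgroup)
    (notMem_ker_sup_span_one hx₀ h)
  obtain ⟨κ, _, c, hc⟩ := exists_finite_colouring_sum_sub_ne (Fin n) hgx₀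
  refine ⟨Fin n → κ, inferInstance, fun r j ↦ c (g (Pi.single j r)), ?_⟩
  rintro ⟨x, hmono, hx⟩
  obtain ⟨i₀⟩ : Nonempty (Fin n) := by
    refine (isEmpty_or_nonempty (Fin n)).resolve_left fun _ ↦ h ⟨0, ?_⟩
    rwa [Subsingleton.elim (fun _ ↦ 0) x]
  refine hc (fun j ↦ g (Pi.single j (x j))) (fun j ↦ g (Pi.single j (x i₀)))
    (fun j ↦ congrFun (hmono j i₀) j) ?_
  have hdiff : x - x₀ ∈ N := Submodule.mem_sup_left (by simp [mulVec_sub, hx, hx₀])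
  have hconst : (fun _ ↦ x i₀) ∈ N :=
    Submodule.mem_sup_right (Submodule.mem_span_singleton.2 ⟨x i₀, by ext; simp⟩)
  rw [Finset.sum_sub_distrib, ← map_sum, ← map_sum, Finset.univ_sum_single x,
    Finset.univ_sum_single fun _ ↦ x i₀, hgN hconst, sub_zero]
  simpa [sub_eq_zero] using hgN hdiff

/-- If the system `Ax = b` over a commutative ring `R` (with `b ∈ R^m` non-zero) has no
constant solution, then there is a finite colouring of `R` with no monochromatic solution. -/
theorem exists_bad_colouring_ring {R : Type*} [CommRing R] {m n : ℕ}
    (A : Matrix (Fin m) (Fin n) R) (b : Fin m → R) (hb : b ≠ 0)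
    (h : ¬ ∃ r : R, A.mulVec (fun _ => r) = b) :
    ∃ (κ : Type) (_ : Finite κ) (c : R → κ),
      ¬ ∃ x : Fin n → R, (∀ i j : Fin n, c (x i) = c (x j)) ∧ A.mulVec x = b :=
  exists_bad_colouring_ring_general A b h
end

section
/- Let Q be an abelian group and let q ∈ Q be a non-zero element such that every non-trivial subgroup of Q contains q. Then there exists an injective group homomorphism from Q into the circle group ℝ/ℤ. -/
/-!
Since `ℚ/ℤ` is an injective cogenerator, some character `Q → ℚ/ℤ` does not vanish on `q`.
Its kernel is a subgroup avoiding `q`, hence trivial, and `ℚ/ℤ` sits inside `ℝ/ℤ`.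
-/

theorem AddMonoidHom.injective_of_apply_ne_zero {G H : Type*} [AddGroup G] [AddGroup H]
    {q : G} (hmin : ∀ S : AddSubgroup G, S ≠ ⊥ → q ∈ S) (f : G →+ H) (hf : f q ≠ 0) :
    Function.Injective f := by
  rw [← f.ker_eq_bot_iff]
  by_contra hker
  exact hf (hmin f.ker hker)

namespace AddCircle

noncomputable def ratCastHom_s8 : AddCircle (1 : ℚ) →+ AddCircle (1 : ℝ) :=
  QuotientAddGroup.map _ _ (Rat.castHom ℝ).toAddMonoidHom <| by
    rintro _ ⟨n, rfl⟩
    exact ⟨n, by simp⟩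

theorem ratCastHom_injective_s8 : Function.Injective ratCastHom_s8 := by
  refine (injective_iff_map_eq_zero _).2 fun x hx => ?_
  induction x using QuotientAddGroup.induction_on with
  | H x =>
    obtain ⟨n, hn⟩ := (QuotientAddGroup.eq_zero_iff _).1 hx
    refine (QuotientAddGroup.eq_zero_iff _).2 ⟨n, ?_⟩
    have : ((n : ℚ) : ℝ) = x := by simpa using hn
    simpa using (Rat.cast_injective this)

end AddCircle

/-- If `Q` is an abelian group with a non-zero element `q` contained in every non-trivial
subgroup of `Q`, then `Q` embeds into the circle group `ℝ/ℤ`. -/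
theorem embeds_in_circle_of_min_element {Q : Type*} [AddCommGroup Q]
    (q : Q) (hq : q ≠ 0) (hmin : ∀ S : AddSubgroup Q, S ≠ ⊥ → q ∈ S) :
    ∃ θ : Q →+ AddCircle (1 : ℝ), Function.Injective θ := by
  obtain ⟨c, hc⟩ := CharacterModule.exists_character_apply_ne_zero_of_ne_zero hq
  exact ⟨AddCircle.ratCastHom_s8.comp c,
    AddCircle.ratCastHom_injective_s8.comp (AddMonoidHom.injective_of_apply_ne_zero hmin c hc)⟩
end

section
/- Let R be a commutative ring, let M be an R-module, let A be an m × n matrix with entries in R, and let b ∈ M^m be non-zero. Then the system of equations Ax = b (where x ∈ M^n and the matrix acts via the module structure) is partition regular over M if and only if it has a constant solution, i.e. there exists y ∈ M such that A applied to the vector (y, y, …, y) equals b. -/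
/-!
Write the system as `Φ x = b` for an additive map `Φ : M^ι → G`. If `b` is not of the form
`Φ (y, …, y)`, a character of `G` that kills the image of the diagonal but not `b`, followed by
`ℚ/ℤ ↪ ℝ/ℤ`, turns the system into `Ψ x = β ≠ 0` with `Ψ` vanishing on constant vectors. Color
`t ∈ M` by which small cell of the compact circle contains each `Ψ (Pi.single j t)`. For a
monochromatic `x`, `Ψ x = Ψ (x - const (x i))` is a sum of `card ι` differences of points in
common cells, hence too small to be `β`.
-/

universe u

def IsPartitionRegular {ι M : Type*} (S : Set (ι → M)) : Prop :=
  ∀ (κ : Type) [Finite κ] (c : M → κ), ∃ x : ι → M, (∀ i j, c (x i) = c (x j)) ∧ x ∈ S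

theorem IsPartitionRegular.mono {ι M : Type*} {S T : Set (ι → M)} (hS : IsPartitionRegular S)
    (hST : S ⊆ T) : IsPartitionRegular T := fun κ _ c =>
  (hS κ c).imp fun _ ⟨hmono, hx⟩ => ⟨hmono, hST hx⟩

noncomputable def ratCircleToRealCircle : AddCircle (1 : ℚ) →+ AddCircle (1 : ℝ) :=
  QuotientAddGroup.map _ _ (Rat.castHom ℝ).toAddMonoidHom <| by
    rintro _ ⟨k, rfl⟩
    exact ⟨k, by simp⟩

theorem ratCircleToRealCircle_injective : Function.Injective ratCircleToRealCircle := by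
  refine (injective_iff_map_eq_zero _).2 fun q hq => ?_
  induction q using QuotientAddGroup.induction_on with | H q => ?_
  change ((q : ℝ) : AddCircle (1 : ℝ)) = 0 at hq
  obtain ⟨k, hk⟩ := (AddCircle.coe_eq_zero_iff (1 : ℝ)).1 hq
  have hkq : ((k : ℚ) : ℝ) = q := by simpa using hk
  exact (AddCircle.coe_eq_zero_iff (1 : ℚ)).2 ⟨k, by rw [zsmul_one]; exact_mod_cast hkq⟩

theorem exists_finite_coloring_dist_lt {X : Type u} [PseudoMetricSpace X] [CompactSpace X]
    {ε : ℝ} (hε : 0 < ε) :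
    ∃ (κ : Type u) (_ : Finite κ) (c : X → κ), ∀ a b, c a = c b → dist a b < ε := by
  obtain ⟨t, -, hcover⟩ :=
    Metric.finite_approx_of_totallyBounded (isCompact_univ (X := X)).totallyBounded (ε / 2)
      (half_pos hε)
  have : ∀ x : X, ∃ y : t, dist x y < ε / 2 := fun x => by
    simpa using hcover.2 (Set.mem_univ x)
  choose c hc using this
  refine ⟨t, hcover.1.to_subtype, c, fun a b hab => ?_⟩
  calc dist a b ≤ dist a (c a) + dist b (c b) := by rw [hab]; exact dist_triangle_right _ _ _
    _ < ε / 2 + ε / 2 := add_lt_add (hc a) (hc b)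
    _ = ε := add_halves ε

theorem map_eq_sum_sub_map_single {ι M G : Type*} [Fintype ι] [DecidableEq ι] [AddCommGroup M]
    [AddCommGroup G] (Ψ : (ι → M) →+ G) (hΨ : ∀ t, Ψ (fun _ => t) = 0) (x : ι → M) (i : ι) :
    Ψ x = ∑ j, (Ψ (Pi.single j (x j)) - Ψ (Pi.single j (x i))) := by
  calc Ψ x = Ψ (x - fun _ => x i) := by rw [map_sub, hΨ, sub_zero]
    _ = _ := by
      conv_lhs => rw [← Finset.univ_sum_single (x - fun _ => x i)]
      simp [map_sum, Pi.single_sub]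

theorem not_isPartitionRegular_of_map_const_eq_zero {ι : Type} [Fintype ι] {M : Type*}
    {X : Type} [AddCommGroup M] [NormedAddCommGroup X] [CompactSpace X] (Ψ : (ι → M) →+ X)
    (hΨ : ∀ t, Ψ (fun _ => t) = 0) {β : X} (hβ : β ≠ 0) :
    ¬ IsPartitionRegular {x | Ψ x = β} := by
  classical
  intro h
  obtain ⟨κ, _, c, hc⟩ := exists_finite_coloring_dist_lt
    (X := X) (ε := ‖β‖ / (Fintype.card ι + 1)) (by positivity)
  obtain ⟨x, hmono, hx⟩ := h (ι → κ) fun t j => c (Ψ (Pi.single j t))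
  rcases isEmpty_or_nonempty ι with hι | ⟨⟨i⟩⟩
  · exact hβ (hx.symm.trans (Subsingleton.elim x (fun _ => 0) ▸ hΨ 0))
  set ε : ℝ := ‖β‖ / (Fintype.card ι + 1)
  have hclose : ∀ j, ‖Ψ (Pi.single j (x j)) - Ψ (Pi.single j (x i))‖ ≤ ε := fun j => by
    rw [← dist_eq_norm]
    exact (hc _ _ (congrFun (hmono j i) j)).le
  have hsmall : Fintype.card ι * ε < ‖β‖ := by
    have := norm_pos_iff.2 hβ
    rw [mul_div_assoc', div_lt_iff₀ (by positivity)]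
    linarith
  have hx : Ψ x = β := hx
  refine hsmall.not_ge ?_
  calc ‖β‖ = ‖∑ j, (Ψ (Pi.single j (x j)) - Ψ (Pi.single j (x i)))‖ := by
        rw [← hx, ← map_eq_sum_sub_map_single Ψ hΨ x i]
    _ ≤ ∑ _j : ι, ε := norm_sum_le_of_le _ fun j _ => hclose j
    _ = Fintype.card ι * ε := by simp

theorem isPartitionRegular_iff_exists_const {ι : Type} [Fintype ι] {M G : Type*}
    [AddCommGroup M] [AddCommGroup G] (Φ : (ι → M) →+ G) (b : G) :
    IsPartitionRegular {x | Φ x = b} ↔ ∃ y, Φ (fun _ => y) = b := by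
  refine ⟨fun h => ?_, fun ⟨y, hy⟩ κ _ c => ⟨fun _ => y, fun _ _ => rfl, hy⟩⟩
  by_contra hb
  set H := (Φ.comp (Pi.constAddMonoidHom ι M)).range
  have hbH : (b : G ⧸ H) ≠ 0 := by
    rwa [Ne, QuotientAddGroup.eq_zero_iff, AddMonoidHom.mem_range]
  obtain ⟨χ, hχ⟩ := CharacterModule.exists_character_apply_ne_zero_of_ne_zero hbH
  let Ψ : (ι → M) →+ AddCircle (1 : ℝ) :=
    ratCircleToRealCircle.comp
      ((χ : G ⧸ H →+ AddCircle (1 : ℚ)).comp ((QuotientAddGroup.mk' H).comp Φ))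
  refine not_isPartitionRegular_of_map_const_eq_zero Ψ (fun t => ?_)
    (ratCircleToRealCircle_injective.ne_iff' (map_zero _) |>.2 hχ) (h.mono fun x hx => ?_)
  · have hdiag : ((Φ fun _ => t : G) : G ⧸ H) = 0 := (QuotientAddGroup.eq_zero_iff _).2 ⟨t, rfl⟩
    change ratCircleToRealCircle (χ (Φ fun _ => t : G)) = 0
    rw [hdiag, map_zero, map_zero]
  · exact congrArg (fun g : G => ratCircleToRealCircle (χ g)) hx

def Matrix.mulVecAddMonoidHom {R M : Type*} [Semiring R] [AddCommMonoid M] [Module R M]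
    {m n : Type*} [Fintype n] (A : Matrix m n R) : (n → M) →+ (m → M) where
  toFun x i := ∑ j, A i j • x j
  map_zero' := by ext; simp
  map_add' x y := by ext; simp [smul_add, Finset.sum_add_distrib]

theorem rado_inhomogeneous_module_general {R : Type*} [CommRing R] {M : Type*} [AddCommGroup M]
    [Module R M] {m n : ℕ} (A : Matrix (Fin m) (Fin n) R) (b : Fin m → M) :
    (∀ (κ : Type) [Finite κ] (c : M → κ),
      ∃ x : Fin n → M, (∀ i j : Fin n, c (x i) = c (x j)) ∧
        (fun i => ∑ j : Fin n, A i j • x j) = b) ↔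
    (∃ y : M, (fun i => ∑ j : Fin n, A i j • y) = b) :=
  isPartitionRegular_iff_exists_const (A.mulVecAddMonoidHom (M := M)) b

/-- **Rado's theorem for modules.** For a commutative ring `R`, an `R`-module `M`, an
`m × n` matrix `A` over `R` and non-zero `b ∈ M^m`, the system `Ax = b` (with
`(Ax)_i = ∑_j A i j • x j`) is partition regular over `M` iff it has a constant solution. -/
theorem rado_inhomogeneous_module {R : Type*} [CommRing R] {M : Type*} [AddCommGroup M]
    [Module R M] {m n : ℕ} (A : Matrix (Fin m) (Fin n) R) (b : Fin m → M) (hb : b ≠ 0) :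
    (∀ (κ : Type) [Finite κ] (c : M → κ),
      ∃ x : Fin n → M, (∀ i j : Fin n, c (x i) = c (x j)) ∧
        (fun i => ∑ j : Fin n, A i j • x j) = b) ↔
    (∃ y : M, (fun i => ∑ j : Fin n, A i j • y) = b) :=
  rado_inhomogeneous_module_general A b
end

section
/- Let R be a commutative ring, let A be an m × n matrix with entries in R with columns c⁽¹⁾, …, c⁽ⁿ⁾ and column sum s = c⁽¹⁾ + ⋯ + c⁽ⁿ⁾, and let b ∈ R^m. Let θ : R^m → ℝ/ℤ be an additive group homomorphism such that θ(rs) = 0 for every r ∈ R and θ(b) ≠ 0. Then there exists a positive integer d and a finite colouring of R with d^n colours, namely colouring t ∈ R by the n-tuple obtained by recording, for each i, which of the d arcs {z ∈ ℝ/ℤ : j/d ≤ z < (j+1)/d} contains θ(c⁽ⁱ⁾ t), such that no vector x ∈ R^n with all entries of the same colour satisfies Ax = b. -/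
/-- Let `A` be an `m × n` matrix over a commutative ring `R` with columns
`c⁽¹⁾, …, c⁽ⁿ⁾` and column sum `s`, let `b ∈ R^m`, and let `θ : R^m → ℝ/ℤ` be an additive
homomorphism with `θ (r • s) = 0` for all `r ∈ R` and `θ b ≠ 0`. Then there is a positive
integer `d` and a colouring of `R` with `d^n` colours — colouring `t` by the tuple
recording, for each `i`, which of the `d` arcs `[j/d, (j+1)/d)` of the circle contains
`θ(c⁽ⁱ⁾ t)` — for which no monochromatic vector `x` satisfies `Ax = b`. -/
theorem no_monochromatic_solution_ring {R : Type*} [CommRing R] {m n : ℕ}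
    (A : Matrix (Fin m) (Fin n) R) (b : Fin m → R)
    (θ : (Fin m → R) →+ AddCircle (1 : ℝ))
    (hs : ∀ r : R, θ (fun k => r * ∑ i : Fin n, A k i) = 0)
    (hb : θ b ≠ 0) :
    ∃ d : ℕ, 0 < d ∧ ∃ colouring : R → (Fin n → Fin d),
      (∀ (t : R) (i : Fin n), ∃ r : ℝ,
        (r : AddCircle (1 : ℝ)) = θ (fun k => A k i * t) ∧
        (colouring t i : ℝ) / d ≤ r ∧ r < ((colouring t i : ℝ) + 1) / d) ∧
      ¬ ∃ x : Fin n → R,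
        (∀ i j : Fin n, colouring (x i) = colouring (x j)) ∧ A.mulVec x = b := by
  haveI : Fact ((0:ℝ) < 1) := ⟨zero_lt_one⟩
  set rep : AddCircle (1:ℝ) → ℝ := fun z => (AddCircle.equivIco 1 0 z : ℝ) with hrepdef
  have hrep_coe : ∀ z : AddCircle (1:ℝ), ((rep z : ℝ) : AddCircle (1:ℝ)) = z := fun z =>
    (AddCircle.equivIco 1 0).symm_apply_apply z
  have hrep_mem : ∀ z : AddCircle (1:ℝ), 0 ≤ rep z ∧ rep z < 1 := by
    intro z
    have h := (AddCircle.equivIco 1 0 z).2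
    simpa using h
  set β : ℝ := rep (θ b) with hβdef
  have hβ0 : 0 < β := by
    rcases lt_or_eq_of_le (hrep_mem (θ b)).1 with h | h
    · exact h
    · exfalso; apply hb
      rw [← hrep_coe (θ b), ← h]
      simp
  have hβ1 : β < 1 := (hrep_mem (θ b)).2
  have hε : 0 < min β (1 - β) := lt_min hβ0 (by linarith)
  obtain ⟨d, hd⟩ := exists_nat_gt ((n : ℝ) / min β (1 - β))
  have hdpos : 0 < d := by
    by_contra h
    push_neg at h
    interval_cases d
    have : (0:ℝ) ≤ (n : ℝ) / min β (1 - β) := div_nonneg (by positivity) hε.le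
    simp at hd; linarith
  have hdR : (0:ℝ) < d := by exact_mod_cast hdpos
  have hnd : (n : ℝ) / d < min β (1 - β) := by
    rw [div_lt_iff₀ hdR]
    calc (n:ℝ) = ((n:ℝ) / min β (1-β)) * min β (1-β) := by field_simp
    _ < d * min β (1-β) := mul_lt_mul_of_pos_right hd hε
    _ = min β (1-β) * d := mul_comm _ _
  refine ⟨d, hdpos, ?_⟩
  have hcol : ∀ t : R, ∀ i : Fin n, ⌊(d:ℝ) * rep (θ (fun k => A k i * t))⌋₊ < d := by
    intro t i
    have h := hrep_mem (θ (fun k => A k i * t))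
    rw [Nat.floor_lt (mul_nonneg hdR.le h.1)]
    calc (d:ℝ) * rep _ < d * 1 := by nlinarith [h.2]
    _ = d := mul_one _
  refine ⟨fun t i => ⟨⌊(d:ℝ) * rep (θ (fun k => A k i * t))⌋₊, hcol t i⟩, ?_, ?_⟩
  · intro t i
    refine ⟨rep (θ (fun k => A k i * t)), hrep_coe _, ?_, ?_⟩
    · rw [div_le_iff₀ hdR]
      simpa [mul_comm] using Nat.floor_le (a := (d:ℝ) * rep (θ (fun k => A k i * t)))
        (mul_nonneg hdR.le (hrep_mem _).1)
    · rw [lt_div_iff₀ hdR]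
      simpa [mul_comm] using Nat.lt_floor_add_one ((d:ℝ) * rep (θ (fun k => A k i * t)))
  · rintro ⟨x, hmono, hAx⟩
    rcases Nat.eq_zero_or_pos n with hn | hn
    · subst hn
      apply hb
      have : b = 0 := by
        rw [← hAx]; funext k; simp [Matrix.mulVec, dotProduct]
      rw [this]; simp
    · set i0 : Fin n := ⟨0, hn⟩
      set f : Fin n → AddCircle (1:ℝ) := fun i => θ (fun k => A k i * x i) with hf
      set g : Fin n → AddCircle (1:ℝ) := fun i => θ (fun k => A k i * x i0) with hg
      have hθb : θ b = ∑ i : Fin n, f i := by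
        rw [← hAx, ← map_sum]
        congr 1
        funext k
        rw [Finset.sum_apply]
        rfl
      have hg0 : ∑ i : Fin n, g i = 0 := by
        rw [← map_sum]
        have he : (∑ i : Fin n, fun k => A k i * x i0) = fun k => x i0 * ∑ i : Fin n, A k i := by
          funext k
          rw [Finset.sum_apply, Finset.mul_sum]
          exact Finset.sum_congr rfl fun i _ => mul_comm _ _
        rw [he]
        exact hs (x i0)
      have hone : (d:ℝ) * (1/d) = 1 := by field_simp
      have hbound : ∀ i : Fin n, |rep (f i) - rep (g i)| < 1 / d := by
        intro i
        have hcoleq : ⌊(d:ℝ) * rep (f i)⌋₊ = ⌊(d:ℝ) * rep (g i)⌋₊ := by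
          have h := congrFun (hmono i i0) i
          exact congrArg Fin.val h
        set c := ⌊(d:ℝ) * rep (g i)⌋₊ with hc
        have h1 : (c:ℝ) ≤ d * rep (f i) := by
          rw [← hcoleq]; exact Nat.floor_le (mul_nonneg hdR.le (hrep_mem _).1)
        have h1' : (d:ℝ) * rep (f i) < c + 1 := by rw [← hcoleq]; exact Nat.lt_floor_add_one _
        have h2 : (c:ℝ) ≤ d * rep (g i) := Nat.floor_le (mul_nonneg hdR.le (hrep_mem _).1)
        have h2' : (d:ℝ) * rep (g i) < c + 1 := Nat.lt_floor_add_one _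
        rw [abs_lt]
        constructor <;> nlinarith [hone, hdR]
      set Δ : ℝ := ∑ i : Fin n, (rep (f i) - rep (g i)) with hΔdef
      have hΔcoe : ((Δ : ℝ) : AddCircle (1:ℝ)) = θ b := by
        have h1 : ((Δ : ℝ) : AddCircle (1:ℝ))
            = ∑ i : Fin n, ((rep (f i) - rep (g i) : ℝ) : AddCircle (1:ℝ)) :=
          map_sum (QuotientAddGroup.mk' _) _ _
        rw [h1]
        have h2 : ∀ i : Fin n, ((rep (f i) - rep (g i) : ℝ) : AddCircle (1:ℝ)) = f i - g i := by
          intro i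
          rw [AddCircle.coe_sub, hrep_coe, hrep_coe]
        rw [Finset.sum_congr rfl fun i _ => h2 i, Finset.sum_sub_distrib, hg0, sub_zero, hθb]
      have hΔb : |Δ| < (n:ℝ)/d := by
        haveI : Nonempty (Fin n) := Fin.pos_iff_nonempty.mp hn
        calc |Δ| ≤ ∑ i : Fin n, |rep (f i) - rep (g i)| := Finset.abs_sum_le_sum_abs _ _
        _ < ∑ _i : Fin n, 1/(d:ℝ) :=
          Finset.sum_lt_sum_of_nonempty Finset.univ_nonempty fun i _ => hbound i
        _ = n * (1/d) := by simp [Finset.sum_const, Finset.card_univ]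
        _ = (n:ℝ)/d := by field_simp
      -- θ b = ↑β as well, so Δ - β is an integer
      have hβcoe : ((β : ℝ) : AddCircle (1:ℝ)) = θ b := hrep_coe _
      have hzero : ((Δ - β : ℝ) : AddCircle (1:ℝ)) = 0 := by
        rw [AddCircle.coe_sub, hΔcoe, hβcoe, sub_self]
      obtain ⟨k, hk⟩ := (AddCircle.coe_eq_zero_iff _).mp hzero
      have hkk : (k:ℝ) = Δ - β := by
        rw [← hk]; simp
      have hβm : (n:ℝ)/d < β := lt_of_lt_of_le hnd (min_le_left _ _)
      have hβm' : (n:ℝ)/d < 1 - β := lt_of_lt_of_le hnd (min_le_right _ _)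
      rw [abs_lt] at hΔb
      have hk1 : (k:ℝ) < 0 := by rw [hkk]; linarith
      have hk2 : (-1:ℝ) < k := by rw [hkk]; linarith
      have hk1' : k < 0 := by exact_mod_cast hk1
      have hk2' : (-1:ℤ) < k := by exact_mod_cast hk2
      omega
end
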